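/- arXiv:1502.06919 — 2 statements merged into one kernel-verified Lean document; each statement's English description precedes it below -/
import Mathlib

section
/- For any pair of matrices X, X̃ ∈ ℝ^{m₁×m₂}, ‖P_X(X̃)‖_{σ,1} ≤ √(2·rank(X)) · ‖X̃‖_{σ,2}. -/
open MeasureTheory ProbabilityTheory Matrix

/-- Singular values of a rectangular real matrix: square roots of the
eigenvalues of `Xᵀ * X`. -/
noncomputable def singVals {m₁ m₂ : ℕ} (X : Matrix (Fin m₁) (Fin m₂) ℝ) : Fin m₂ → ℝ :=
  fun i => Real.sqrt ((show (Xᵀ * X).IsHermitian by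
    simpa [Matrix.conjTranspose_eq_transpose_of_trivial] using
      Matrix.isHermitian_conjTranspose_mul_self X).eigenvalues i)

/-- Nuclear (Schatten-1) norm `‖·‖_{σ,1}`. -/
noncomputable def nucNorm {m₁ m₂ : ℕ} (X : Matrix (Fin m₁) (Fin m₂) ℝ) : ℝ :=
  ∑ i, singVals X i

/-- Operator (Schatten-∞) norm `‖·‖_{σ,∞}`: the largest singular value. -/
noncomputable def opNorm {m₁ m₂ : ℕ} (X : Matrix (Fin m₁) (Fin m₂) ℝ) : ℝ :=
  ⨆ i, singVals X i

/-- Frobenius (Schatten-2) norm `‖·‖_{σ,2}`. -/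
noncomputable def frobNorm {m₁ m₂ : ℕ} (X : Matrix (Fin m₁) (Fin m₂) ℝ) : ℝ :=
  Real.sqrt (∑ k, ∑ l, (X k l) ^ 2)

/-- Entrywise sup norm `‖·‖_∞`. -/
noncomputable def linfNorm {m₁ m₂ : ℕ} (X : Matrix (Fin m₁) (Fin m₂) ℝ) : ℝ :=
  ⨆ p : Fin m₁ × Fin m₂, |X p.1 p.2|

/-- The matrix of the orthogonal projection onto a subspace `S` of `ℝ^k`. -/
noncomputable def projM {k : ℕ} (S : Submodule ℝ (EuclideanSpace ℝ (Fin k))) :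
    Matrix (Fin k) (Fin k) ℝ :=
  LinearMap.toMatrix (EuclideanSpace.basisFun (Fin k) ℝ).toBasis
    (EuclideanSpace.basisFun (Fin k) ℝ).toBasis
    (S.subtype ∘ₗ (S.orthogonalProjectionOnto).toLinearMap)

/-- The span `S₁(X)` of the left singular vectors of `X`, i.e. its column space
(`S₂(X)`, the span of the right singular vectors, is `colSpace Xᵀ`). -/
noncomputable def colSpace {m₁ m₂ : ℕ} (X : Matrix (Fin m₁) (Fin m₂) ℝ) :
    Submodule ℝ (EuclideanSpace ℝ (Fin m₁)) :=
  LinearMap.range (Matrix.toEuclideanLin X)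

/-- The projection `P⊥_X(T) = P_{S₁(X)⊥} T P_{S₂(X)⊥}`. -/
noncomputable def Pperp {m₁ m₂ : ℕ} (X T : Matrix (Fin m₁) (Fin m₂) ℝ) :
    Matrix (Fin m₁) (Fin m₂) ℝ :=
  projM (Submodule.orthogonal (colSpace X)) * T * projM (Submodule.orthogonal (colSpace Xᵀ))

/-- The projection `P_X(T) = T - P⊥_X(T)`. -/
noncomputable def Ppar {m₁ m₂ : ℕ} (X T : Matrix (Fin m₁) (Fin m₂) ℝ) :
    Matrix (Fin m₁) (Fin m₂) ℝ :=
  T - Pperp X T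

/-! Let `P`, `Q` be the orthogonal projections onto `S₁(X)` and `S₂(X)`. Then
`P_X(X̃) = P X̃ + (1 - P) X̃ Q` has rank at most `rank P + rank Q = 2 rank X`, and
`P_X(X̃) = X̃ - (1 - P) X̃ (1 - Q)` removes from `X̃` a component orthogonal to the rest in
the trace inner product `⟪A, B⟫ = tr (Aᴴ B)`, so `‖P_X(X̃)‖_{σ,2} ≤ ‖X̃‖_{σ,2}`. Finally
`‖M‖_{σ,1} ≤ √(rank M) ‖M‖_{σ,2}` by Cauchy–Schwarz over the `rank M` nonzero singular
values. -/

open Module Finset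

namespace Matrix

variable {m n : Type*} [Fintype n]

theorem rank_add_le {K : Type*} [Field K] (A B : Matrix m n K) :
    (A + B).rank ≤ A.rank + B.rank := by
  have h : LinearMap.range (A + B).mulVecLin ≤
      LinearMap.range A.mulVecLin ⊔ LinearMap.range B.mulVecLin := by
    rintro x ⟨y, rfl⟩
    rw [mulVecLin_add]
    exact Submodule.add_mem_sup ⟨y, rfl⟩ ⟨y, rfl⟩
  exact (Submodule.finrank_mono h).trans (Submodule.finrank_add_le_finrank_add_finrank _ _)

variable [Fintype m]

theorem trace_conjTranspose_mul_comm (A B : Matrix m n ℝ) :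
    (Aᴴ * B).trace = (Bᴴ * A).trace := by
  rw [← trace_transpose, ← conjTranspose_eq_transpose_of_trivial, conjTranspose_mul,
    conjTranspose_conjTranspose]

theorem trace_conjTranspose_mul_self_mul_mul {P : Matrix m m ℝ} {Q : Matrix n n ℝ}
    (hP : IsStarProjection P) (hQ : IsStarProjection Q) (T : Matrix m n ℝ) :
    ((P * T * Q)ᴴ * (P * T * Q)).trace = (Tᴴ * (P * T * Q)).trace := by
  have hPs : Pᴴ = P := hP.isSelfAdjoint.star_eq
  have hQs : Qᴴ = Q := hQ.isSelfAdjoint.star_eq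
  calc ((P * T * Q)ᴴ * (P * T * Q)).trace = (Q * (Tᴴ * (P * P) * T * Q)).trace := by
        simp only [conjTranspose_mul, hPs, hQs, Matrix.mul_assoc]
    _ = (Tᴴ * P * T * (Q * Q)).trace := by
        rw [trace_mul_comm, hP.isIdempotentElem.eq]; simp only [Matrix.mul_assoc]
    _ = (Tᴴ * (P * T * Q)).trace := by
        rw [hQ.isIdempotentElem.eq]; simp only [Matrix.mul_assoc]

theorem trace_conjTranspose_mul_self_sub_mul_mul {P : Matrix m m ℝ} {Q : Matrix n n ℝ}
    (hP : IsStarProjection P) (hQ : IsStarProjection Q) (T : Matrix m n ℝ) :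
    ((T - P * T * Q)ᴴ * (T - P * T * Q)).trace =
      (Tᴴ * T).trace - ((P * T * Q)ᴴ * (P * T * Q)).trace := by
  have h := trace_conjTranspose_mul_self_mul_mul hP hQ T
  have h' := trace_conjTranspose_mul_comm T (P * T * Q)
  simp only [conjTranspose_sub, Matrix.sub_mul, Matrix.mul_sub, trace_sub]
  linarith

theorem rank_sub_one_sub_mul_mul_one_sub_le {K : Type*} [Field K] [DecidableEq m] [DecidableEq n]
    (P : Matrix m m K) (Q : Matrix n n K) (T : Matrix m n K) :
    (T - (1 - P) * T * (1 - Q)).rank ≤ P.rank + Q.rank := by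
  have hsplit : T - (1 - P) * T * (1 - Q) = P * T + (1 - P) * T * Q := by
    simp only [Matrix.sub_mul, Matrix.mul_sub, Matrix.one_mul, Matrix.mul_one]
    abel
  rw [hsplit]
  exact (rank_add_le _ _).trans (Nat.add_le_add (rank_mul_le_left _ _) (rank_mul_le_right _ _))

end Matrix

section

variable {m₁ m₂ : ℕ}

theorem frobNorm_eq_sqrt_trace (M : Matrix (Fin m₁) (Fin m₂) ℝ) :
    frobNorm M = √(Mᴴ * M).trace := by
  rw [frobNorm, sum_comm]
  simp [Matrix.trace, Matrix.mul_apply, sq]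

theorem frobNorm_sub_mul_mul_le {P : Matrix (Fin m₁) (Fin m₁) ℝ}
    {Q : Matrix (Fin m₂) (Fin m₂) ℝ}
    (hP : IsStarProjection P) (hQ : IsStarProjection Q) (T : Matrix (Fin m₁) (Fin m₂) ℝ) :
    frobNorm (T - P * T * Q) ≤ frobNorm T := by
  have hnonneg := (posSemidef_conjTranspose_mul_self (P * T * Q)).trace_nonneg
  rw [frobNorm_eq_sqrt_trace, frobNorm_eq_sqrt_trace,
    trace_conjTranspose_mul_self_sub_mul_mul hP hQ]
  exact Real.sqrt_le_sqrt (by linarith)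

theorem sum_singVals_sq (M : Matrix (Fin m₁) (Fin m₂) ℝ) :
    ∑ i, singVals M i ^ 2 = (Mᴴ * M).trace := by
  rw [(isHermitian_conjTranspose_mul_self M).trace_eq_sum_eigenvalues]
  simp only [RCLike.ofReal_real_eq_id, id]
  exact sum_congr rfl fun i _ =>
    Real.sq_sqrt (eigenvalues_conjTranspose_mul_self_nonneg M i)

theorem card_singVals_ne_zero (M : Matrix (Fin m₁) (Fin m₂) ℝ) :
    #{i | singVals M i ≠ 0} = M.rank := by
  rw [← rank_conjTranspose_mul_self,
    (isHermitian_conjTranspose_mul_self M).rank_eq_card_non_zero_eigs,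
    Fintype.card_subtype]
  congr 1
  refine filter_congr fun i _ => ?_
  exact Real.sqrt_ne_zero (eigenvalues_conjTranspose_mul_self_nonneg M i)

theorem nucNorm_le_sqrt_rank_mul_frobNorm (M : Matrix (Fin m₁) (Fin m₂) ℝ) :
    nucNorm M ≤ √M.rank * frobNorm M := by
  rw [frobNorm_eq_sqrt_trace, ← Real.sqrt_mul (Nat.cast_nonneg _)]
  refine Real.le_sqrt_of_sq_le ?_
  rw [nucNorm, ← sum_filter_ne_zero, ← sum_singVals_sq, ← card_singVals_ne_zero]
  calc (∑ i with singVals M i ≠ 0, singVals M i) ^ 2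
      ≤ (#{i | singVals M i ≠ 0} : ℝ) * ∑ i with singVals M i ≠ 0, singVals M i ^ 2 :=
        sq_sum_le_card_mul_sum_sq
    _ ≤ (#{i | singVals M i ≠ 0} : ℝ) * ∑ i, singVals M i ^ 2 := by
        gcongr
        exact subset_univ _

section projM

variable {k : ℕ} (S : Submodule ℝ (EuclideanSpace ℝ (Fin k)))

theorem projM_eq_toEuclideanCLM_symm :
    projM S = (toEuclideanCLM (n := Fin k) (𝕜 := ℝ)).symm S.starProjection :=
  rfl

theorem isStarProjection_projM : IsStarProjection (projM S) :=
  (isStarProjection_starProjection (U := S)).map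
    ((toEuclideanCLM (n := Fin k) (𝕜 := ℝ)).symm :
      (EuclideanSpace ℝ (Fin k) →L[ℝ] EuclideanSpace ℝ (Fin k)) →⋆ₐ[ℝ]
        Matrix (Fin k) (Fin k) ℝ)

theorem projM_orthogonal : projM Sᗮ = 1 - projM S := by
  rw [projM_eq_toEuclideanCLM_symm, projM_eq_toEuclideanCLM_symm, S.starProjection_orthogonal',
    map_sub, map_one]

theorem rank_projM : (projM S).rank = finrank ℝ S := by
  rw [rank_eq_finrank_range_toLin _ (EuclideanSpace.basisFun (Fin k) ℝ).toBasis
    (EuclideanSpace.basisFun (Fin k) ℝ).toBasis, projM, toLin_toMatrix]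
  exact congrArg (fun U : Submodule ℝ _ => finrank ℝ U) S.range_starProjection

end projM

theorem finrank_colSpace (X : Matrix (Fin m₁) (Fin m₂) ℝ) :
    finrank ℝ (colSpace X) = X.rank :=
  (rank_eq_finrank_range_toLin X (EuclideanSpace.basisFun (Fin m₁) ℝ).toBasis
    (EuclideanSpace.basisFun (Fin m₂) ℝ).toBasis).symm

theorem rank_Ppar_le (X T : Matrix (Fin m₁) (Fin m₂) ℝ) : (Ppar X T).rank ≤ 2 * X.rank :=
  calc (Ppar X T).rank ≤ (projM (colSpace X)).rank + (projM (colSpace Xᵀ)).rank := by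
        rw [Ppar, Pperp, projM_orthogonal, projM_orthogonal]
        exact rank_sub_one_sub_mul_mul_one_sub_le _ _ _
    _ = 2 * X.rank := by
        rw [rank_projM, rank_projM, finrank_colSpace, finrank_colSpace, rank_transpose, two_mul]

theorem frobNorm_Ppar_le (X T : Matrix (Fin m₁) (Fin m₂) ℝ) :
    frobNorm (Ppar X T) ≤ frobNorm T :=
  frobNorm_sub_mul_mul_le (isStarProjection_projM _) (isStarProjection_projM _) T

end

/-- Lemma 1(ii): `‖P_X(X̃)‖_{σ,1} ≤ √(2 rank X) ‖X̃‖_{σ,2}`. -/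
theorem nucNorm_Ppar_le (m₁ m₂ : ℕ) (X Xt : Matrix (Fin m₁) (Fin m₂) ℝ) :
    nucNorm (Ppar X Xt) ≤ Real.sqrt (2 * (X.rank : ℝ)) * frobNorm Xt :=
  calc nucNorm (Ppar X Xt) ≤ √(Ppar X Xt).rank * frobNorm (Ppar X Xt) :=
        nucNorm_le_sqrt_rank_mul_frobNorm _
    _ ≤ √(2 * X.rank) * frobNorm Xt :=
        mul_le_mul (Real.sqrt_le_sqrt (mod_cast rank_Ppar_le X Xt)) (frobNorm_Ppar_le X Xt)
          (Real.sqrt_nonneg _) (Real.sqrt_nonneg _)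
end

section
/- For any pair of matrices X, X̃ ∈ ℝ^{m₁×m₂}, ‖X‖_{σ,1} − ‖X̃‖_{σ,1} ≤ ‖P_X(X̃ − X)‖_{σ,1}. -/
open MeasureTheory ProbabilityTheory Matrix

/-! The nuclear norm is dual to the operator norm: `tr (Aᵀ B) ≤ ‖A‖_{σ,1}` whenever `‖B‖ ≤ 1`,
with equality for `B = A (AᵀA)^{-1/2}` (a pseudo-inverse square root). Hence `‖·‖_{σ,1}` satisfies
the triangle inequality and does not increase under multiplication by contractions on either
side. Since `X = P_{S₁(X)} X P_{S₂(X)}` and `P_{S₁(X)} P⊥_X(T) P_{S₂(X)} = 0`, we get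
`X = P_{S₁(X)} (X̃ - P_X(X̃ - X)) P_{S₂(X)}`, so
`‖X‖_{σ,1} ≤ ‖X̃ - P_X(X̃ - X)‖_{σ,1} ≤ ‖X̃‖_{σ,1} + ‖P_X(X̃ - X)‖_{σ,1}`. -/

open scoped Matrix.Norms.L2Operator RealInnerProductSpace

section projM

variable {k : ℕ} (S : Submodule ℝ (EuclideanSpace ℝ (Fin k)))

theorem toEuclideanCLM_projM :
    toEuclideanCLM (n := Fin k) (𝕜 := ℝ) (projM S) = S.starProjection := by
  rw [← StarAlgEquiv.eq_symm_apply]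
  rfl

theorem norm_projM_le_one : ‖projM S‖ ≤ 1 := by
  rw [cstar_norm_def, toEuclideanCLM_projM]
  exact S.starProjection_norm_le

theorem transpose_projM : (projM S)ᵀ = projM S := by
  rw [← conjTranspose_eq_transpose_of_trivial, ← star_eq_conjTranspose]
  apply EquivLike.injective (toEuclideanCLM (n := Fin k) (𝕜 := ℝ))
  rw [map_star, toEuclideanCLM_projM]
  exact isSelfAdjoint_starProjection S

theorem projM_orthogonal_mul_projM : projM Sᗮ * projM S = 0 := by
  apply EquivLike.injective (toEuclideanCLM (n := Fin k) (𝕜 := ℝ))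
  rw [map_mul, map_zero, toEuclideanCLM_projM, toEuclideanCLM_projM]
  exact S.isOrtho_orthogonal_right.symm.starProjection_comp_starProjection

end projM

section colSpace

variable {m₁ m₂ : ℕ} (X : Matrix (Fin m₁) (Fin m₂) ℝ)

theorem projM_colSpace_mul : projM (colSpace X) * X = X := by
  apply toEuclideanLin.injective
  ext1 x
  have hx : toEuclideanLin X x ∈ colSpace X := LinearMap.mem_range_self _ x
  rw [← Submodule.starProjection_eq_self_iff, ← toEuclideanCLM_projM] at hx
  rw [← hx]
  ext i
  simp

theorem mul_projM_colSpace_transpose : X * projM (colSpace Xᵀ) = X := by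
  rw [← transpose_transpose (X * _), transpose_mul, transpose_projM, projM_colSpace_mul,
    transpose_transpose]

theorem projM_mul_add_Pperp_mul_projM (T : Matrix (Fin m₁) (Fin m₂) ℝ) :
    projM (colSpace X) * (X + Pperp X T) * projM (colSpace Xᵀ) = X := by
  simp only [Pperp, Matrix.mul_add, Matrix.add_mul, Matrix.mul_assoc, projM_orthogonal_mul_projM,
    mul_projM_colSpace_transpose, Matrix.mul_zero, add_zero]
  exact projM_colSpace_mul X

end colSpace

theorem Matrix.IsHermitian.trace_cfc {𝕜 n : Type*} [RCLike 𝕜] [Fintype n] [DecidableEq n]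
    {H : Matrix n n 𝕜} (hH : H.IsHermitian) (f : ℝ → ℝ) :
    (cfc f H).trace = ∑ i, (f (hH.eigenvalues i) : 𝕜) := by
  rw [hH.cfc_eq, IsHermitian.cfc, Unitary.conjStarAlgAut_apply, trace_mul_cycle,
    Unitary.coe_star_mul_self, one_mul, trace_diagonal]
  rfl

section transpose

variable {m n : Type*} [Fintype m]

theorem isHermitian_transpose_mul_self (A : Matrix m n ℝ) : (Aᵀ * A).IsHermitian := by
  simpa [conjTranspose_eq_transpose_of_trivial] using isHermitian_conjTranspose_mul_self A

variable [Fintype n]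

theorem l2_opNorm_transpose [DecidableEq m] [DecidableEq n] (A : Matrix m n ℝ) : ‖Aᵀ‖ = ‖A‖ := by
  rw [← conjTranspose_eq_transpose_of_trivial, l2_opNorm_conjTranspose]

theorem inner_toEuclideanLin_transpose_mul [DecidableEq n] (A B : Matrix m n ℝ) (x y : EuclideanSpace ℝ n) :
    ⟪x, toEuclideanLin (Aᵀ * B) y⟫ = ⟪toEuclideanLin A x, toEuclideanLin B y⟫ := by
  simp [EuclideanSpace.inner_eq_star_dotProduct, ← mulVec_mulVec, mulVec_transpose,
    dotProduct_mulVec]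

theorem trace_transpose_mul_eq_sum_inner [DecidableEq n] {ι : Type*} [Fintype ι] (A B : Matrix m n ℝ)
    (b : OrthonormalBasis ι ℝ (EuclideanSpace ℝ n)) :
    (Aᵀ * B).trace = ∑ i, ⟪toEuclideanLin A (b i), toEuclideanLin B (b i)⟫ := by
  rw [← trace_toLin_eq (Aᵀ * B) (EuclideanSpace.basisFun _ ℝ).toBasis,
    ← toEuclideanLin_eq_toLin_orthonormal, LinearMap.trace_eq_sum_inner _ b]
  simp_rw [inner_toEuclideanLin_transpose_mul]

end transpose

theorem abs_inv_sqrt_mul_self_mul_inv_sqrt_le_one (t : ℝ) : |(√t)⁻¹ * t * (√t)⁻¹| ≤ 1 := by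
  rcases le_or_gt t 0 with ht | ht
  · simp [Real.sqrt_eq_zero'.mpr ht]
  · rw [mul_comm, ← mul_assoc, ← mul_inv, Real.mul_self_sqrt ht.le, inv_mul_cancel₀ ht.ne', abs_one]

section nucNorm

variable {m₁ m₂ : ℕ}

theorem norm_toEuclideanLin_eigenvectorBasis (A : Matrix (Fin m₁) (Fin m₂) ℝ)
    (hA : (Aᵀ * A).IsHermitian) (i : Fin m₂) :
    ‖toEuclideanLin A (hA.eigenvectorBasis i)‖ = singVals A i := by
  rw [singVals, ← Real.sqrt_sq (norm_nonneg _), sq, ← real_inner_self_eq_norm_mul_norm,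
    ← inner_toEuclideanLin_transpose_mul, hA.eigenvalues_eq i]
  simp [EuclideanSpace.inner_eq_star_dotProduct, dotProduct_comm]

theorem trace_transpose_mul_le_nucNorm (A B : Matrix (Fin m₁) (Fin m₂) ℝ) (hB : ‖B‖ ≤ 1) :
    (Aᵀ * B).trace ≤ nucNorm A := by
  set b := (isHermitian_transpose_mul_self A).eigenvectorBasis
  rw [trace_transpose_mul_eq_sum_inner A B b, nucNorm]
  gcongr with i
  have hBb : ‖toEuclideanLin B (b i)‖ ≤ 1 :=
    calc ‖toEuclideanLin B (b i)‖ ≤ ‖B‖ * ‖b i‖ := B.l2_opNorm_mulVec (b i)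
      _ ≤ 1 := by rw [b.orthonormal.1 i, mul_one]; exact hB
  calc ⟪toEuclideanLin A (b i), toEuclideanLin B (b i)⟫
      ≤ ‖toEuclideanLin A (b i)‖ * ‖toEuclideanLin B (b i)‖ := real_inner_le_norm _ _
    _ ≤ ‖toEuclideanLin A (b i)‖ := mul_le_of_le_one_right (norm_nonneg _) hBb
    _ = singVals A i := norm_toEuclideanLin_eigenvectorBasis A _ i

theorem exists_norm_le_one_trace_transpose_mul_eq_nucNorm (A : Matrix (Fin m₁) (Fin m₂) ℝ) :
    ∃ B : Matrix (Fin m₁) (Fin m₂) ℝ, ‖B‖ ≤ 1 ∧ (Aᵀ * B).trace = nucNorm A := by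
  have hA := isHermitian_transpose_mul_self A
  have hcont (f : ℝ → ℝ) : ContinuousOn f (spectrum ℝ (Aᵀ * A)) :=
    (Set.toFinite _).continuousOn f
  -- `(√t)⁻¹ = 0` for `t ≤ 0`, so `T` is the pseudo-inverse of `(AᵀA)^{1/2}`.
  set T := cfc (fun t => (√t)⁻¹) (Aᵀ * A) with hTdef
  have hT : Tᵀ = T := by
    rw [← conjTranspose_eq_transpose_of_trivial]
    exact (cfc_predicate _ _ : IsSelfAdjoint T)
  refine ⟨A * T, ?_, ?_⟩
  · have hgram : (A * T)ᴴ * (A * T) = cfc (fun t => (√t)⁻¹ * t * (√t)⁻¹) (Aᵀ * A) := by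
      rw [cfc_mul _ _ _ (hcont _) (hcont _), cfc_mul _ _ _ (hcont _) (hcont _),
        cfc_id' ℝ (Aᵀ * A) hA.isSelfAdjoint, conjTranspose_eq_transpose_of_trivial,
        transpose_mul, hT]
      simp only [Matrix.mul_assoc]
      rfl
    have h := norm_cfc_le (a := Aᵀ * A) zero_le_one
      fun t _ => abs_inv_sqrt_mul_self_mul_inv_sqrt_le_one t
    rw [← hgram, l2_opNorm_conjTranspose_mul_self] at h
    nlinarith [norm_nonneg (A * T)]
  · have hsqrt : Aᵀ * A * T = cfc Real.sqrt (Aᵀ * A) := by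
      conv_lhs => rw [← cfc_id' ℝ (Aᵀ * A) hA.isSelfAdjoint]
      rw [hTdef, ← cfc_mul _ _ _ (hcont _) (hcont _)]
      simp_rw [← div_eq_mul_inv, Real.div_sqrt]
    rw [← Matrix.mul_assoc, hsqrt, hA.trace_cfc]
    rfl

theorem nucNorm_sub_le (A B : Matrix (Fin m₁) (Fin m₂) ℝ) :
    nucNorm (A - B) ≤ nucNorm A + nucNorm B := by
  obtain ⟨C, hC, hAB⟩ := exists_norm_le_one_trace_transpose_mul_eq_nucNorm (A - B)
  have hA := trace_transpose_mul_le_nucNorm A C hC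
  have hB := trace_transpose_mul_le_nucNorm B (-C) (by rwa [norm_neg])
  rw [Matrix.mul_neg, trace_neg] at hB
  rw [← hAB, transpose_sub, Matrix.sub_mul, trace_sub]
  linarith

theorem nucNorm_mul_mul_le {n₁ n₂ : ℕ} (P : Matrix (Fin m₁) (Fin n₁) ℝ)
    (A : Matrix (Fin n₁) (Fin n₂) ℝ) (Q : Matrix (Fin n₂) (Fin m₂) ℝ) (hP : ‖P‖ ≤ 1)
    (hQ : ‖Q‖ ≤ 1) : nucNorm (P * A * Q) ≤ nucNorm A := by
  obtain ⟨C, hC, hPAQ⟩ := exists_norm_le_one_trace_transpose_mul_eq_nucNorm (P * A * Q)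
  have hnorm : ‖Pᵀ * C * Qᵀ‖ ≤ 1 :=
    calc ‖Pᵀ * C * Qᵀ‖ ≤ ‖Pᵀ‖ * ‖C‖ * ‖Qᵀ‖ :=
          (l2_opNorm_mul _ _).trans (by gcongr; exact l2_opNorm_mul _ _)
      _ ≤ 1 := by
          rw [l2_opNorm_transpose, l2_opNorm_transpose]
          exact mul_le_one₀ (mul_le_one₀ hP (norm_nonneg _) hC) (norm_nonneg _) hQ
  calc nucNorm (P * A * Q) = (Aᵀ * (Pᵀ * C * Qᵀ)).trace := by
        rw [← hPAQ, transpose_mul, transpose_mul, ← Matrix.mul_assoc Aᵀ, trace_mul_comm _ Qᵀ]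
        simp only [Matrix.mul_assoc]
    _ ≤ nucNorm A := trace_transpose_mul_le_nucNorm A _ hnorm

end nucNorm

/-- Lemma 1(iii): `‖X‖_{σ,1} - ‖X̃‖_{σ,1} ≤ ‖P_X(X̃ - X)‖_{σ,1}`. -/
theorem nucNorm_sub_le_Ppar (m₁ m₂ : ℕ) (X Xt : Matrix (Fin m₁) (Fin m₂) ℝ) :
    nucNorm X - nucNorm Xt ≤ nucNorm (Ppar X (Xt - X)) := by
  have hsplit : Xt - Ppar X (Xt - X) = X + Pperp X (Xt - X) := by
    rw [Ppar]
    abel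
  rw [sub_le_iff_le_add']
  calc nucNorm X
      = nucNorm (projM (colSpace X) * (Xt - Ppar X (Xt - X)) * projM (colSpace Xᵀ)) := by
        rw [hsplit, projM_mul_add_Pperp_mul_projM]
    _ ≤ nucNorm (Xt - Ppar X (Xt - X)) :=
        nucNorm_mul_mul_le _ _ _ (norm_projM_le_one _) (norm_projM_le_one _)
    _ ≤ nucNorm Xt + nucNorm (Ppar X (Xt - X)) := nucNorm_sub_le _ _
end
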